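/- arXiv:2601.01207 — 2 statements merged into one kernel-verified Lean document; each statement's English description precedes it below -/
import Mathlib

section
/- Let (Ω, 𝒜, μ) be a probability space, let Z and Y be finite sets, let I : Ω → ℐ be a random variable into a measurable space ℐ of observations, and let Y_i : Ω → Y be a random label. Let f : ℐ × Z → (Y → ℝ) assign to each observation and structure a probability distribution on Y (f(ι,z)(y) ≥ 0, ∑_y f(ι,z)(y) = 1), measurably in ι. Let q, p : ℐ → (Z → ℝ) assign to each observation a probability distribution on Z, measurably. Let ℓ : Y × (Y → ℝ) → ℝ be a loss that is L-Lipschitz in its second argument with respect to the ℓ1 norm: |ℓ(y,u) − ℓ(y,w)| ≤ L ∑_{y'} |u(y') − w(y')| for all y, u, w. Define the mixture predictors p̂(ι)(y) = ∑_{z∈Z} q(ι)(z) f(ι,z)(y) and p̃(ι)(y) = ∑_{z∈Z} p(ι)(z) f(ι,z)(y), and the risks R(p̂) = E[ℓ(Y_i, p̂(I))], R(p̃) = E[ℓ(Y_i, p̃(I))] (assumed integrable). Then R(p̂) − R(p̃) ≤ L · E[ ∑_{z∈Z} |q(I)(z) − p(I)(z)| ]. -/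
open MeasureTheory

/-- Risk decomposition under structural approximation (Theorem 1 of the paper).
If predictions are formed by marginalizing a conditional classifier `f` over an
approximate structural posterior `q` instead of the true posterior `p`, and the
loss `ℓ` is `L`-Lipschitz in its second argument w.r.t. the ℓ1 norm, then the
excess risk is bounded by `L` times the expected ℓ1 distance between `q` and `p`. -/
theorem stmt1
    (Ω 𝓘 : Type*) [MeasurableSpace Ω] [MeasurableSpace 𝓘]
    (μ : Measure Ω) [IsProbabilityMeasure μ]
    (Z Y : Type*) [Fintype Z] [Fintype Y] [MeasurableSpace Y]
    (I : Ω → 𝓘) (Yi : Ω → Y)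
    (hI : Measurable I) (hYi : Measurable Yi)
    (f : 𝓘 → Z → Y → ℝ)
    (hf_meas : ∀ z y, Measurable (fun ι => f ι z y))
    (hf_nonneg : ∀ ι z y, 0 ≤ f ι z y)
    (hf_sum : ∀ ι z, ∑ y, f ι z y = 1)
    (q p : 𝓘 → Z → ℝ)
    (hq_meas : ∀ z, Measurable (fun ι => q ι z))
    (hp_meas : ∀ z, Measurable (fun ι => p ι z))
    (hq_nonneg : ∀ ι z, 0 ≤ q ι z) (hq_sum : ∀ ι, ∑ z, q ι z = 1)
    (hp_nonneg : ∀ ι z, 0 ≤ p ι z) (hp_sum : ∀ ι, ∑ z, p ι z = 1)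
    (L : ℝ) (ℓ : Y → (Y → ℝ) → ℝ)
    (hLip : ∀ y (u w : Y → ℝ), |ℓ y u - ℓ y w| ≤ L * ∑ y', |u y' - w y'|)
    -- mixture predictors
    (phat ptilde : 𝓘 → Y → ℝ)
    (hphat : ∀ ι y, phat ι y = ∑ z, q ι z * f ι z y)
    (hptilde : ∀ ι y, ptilde ι y = ∑ z, p ι z * f ι z y)
    -- integrability of the risks and of the ℓ1 distance
    (hInt_hat : Integrable (fun ω => ℓ (Yi ω) (phat (I ω))) μ)
    (hInt_tilde : Integrable (fun ω => ℓ (Yi ω) (ptilde (I ω))) μ)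
    (hInt_dist : Integrable (fun ω => ∑ z, |q (I ω) z - p (I ω) z|) μ) :
    (∫ ω, ℓ (Yi ω) (phat (I ω)) ∂μ) - (∫ ω, ℓ (Yi ω) (ptilde (I ω)) ∂μ)
      ≤ L * ∫ ω, ∑ z, |q (I ω) z - p (I ω) z| ∂μ := by
  -- L is nonnegative
  have hΩ : Nonempty Ω := by
    by_contra h
    simp only [not_nonempty_iff] at h
    have := measure_univ (μ := μ)
    simp [Set.univ_eq_empty_iff.2 h] at this
  have hY : Nonempty Y := ⟨Yi (Classical.arbitrary Ω)⟩
  have hL : 0 ≤ L := by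
    have y0 := Classical.arbitrary Y
    have h := hLip y0 (fun _ => 1) (fun _ => 0)
    have hc : (0:ℝ) < ∑ _y' : Y, |(1:ℝ) - 0| := by
      simp [Finset.card_pos, Finset.univ_nonempty]
      exact_mod_cast Fintype.card_pos
    nlinarith [abs_nonneg (ℓ y0 (fun _ => 1) - ℓ y0 (fun _ => 0))]
  -- pointwise bound
  have key : ∀ ω, ℓ (Yi ω) (phat (I ω)) - ℓ (Yi ω) (ptilde (I ω))
      ≤ L * ∑ z, |q (I ω) z - p (I ω) z| := by
    intro ω
    set ι := I ω
    have h1 : ℓ (Yi ω) (phat ι) - ℓ (Yi ω) (ptilde ι)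
        ≤ L * ∑ y', |phat ι y' - ptilde ι y'| :=
      le_trans (le_abs_self _) (hLip _ _ _)
    have h2 : ∑ y', |phat ι y' - ptilde ι y'| ≤ ∑ z, |q ι z - p ι z| := by
      calc ∑ y', |phat ι y' - ptilde ι y'|
          = ∑ y', |∑ z, (q ι z - p ι z) * f ι z y'| := by
            simp [hphat, hptilde, ← Finset.sum_sub_distrib, sub_mul]
        _ ≤ ∑ y', ∑ z, |q ι z - p ι z| * f ι z y' := by
            refine Finset.sum_le_sum fun y' _ => ?_
            refine le_trans (Finset.abs_sum_le_sum_abs _ _) ?_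
            refine Finset.sum_le_sum fun z _ => ?_
            rw [abs_mul, abs_of_nonneg (hf_nonneg ι z y')]
        _ = ∑ z, |q ι z - p ι z| := by
            rw [Finset.sum_comm]
            simp [← Finset.mul_sum, hf_sum]
    nlinarith [mul_le_mul_of_nonneg_left h2 hL]
  rw [← integral_sub hInt_hat hInt_tilde, ← integral_const_mul]
  exact integral_mono (hInt_hat.sub hInt_tilde) (hInt_dist.const_mul L) key
end

section
/- Let t ∈ ℝ^d, V ∈ ℝ^{d×m} with columns v_1, …, v_m, and λ > 0. Suppose the j-th column is orthogonal both to the target and to all other columns: ⟨v_j, t⟩ = 0 and ⟨v_j, v_k⟩ = 0 for all k ≠ j. Then every global minimizer α* of the LASSO objective F(α) = ‖t − Vα‖₂² + λ‖α‖₁ satisfies α*_j = 0. -/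
open Matrix

/-- Noisy-neighbor suppression in the decorrelated case: if the `j`-th column
of `V` is orthogonal to the target `t` and to every other column, then every
global minimizer of the LASSO objective `F(α) = ‖t − Vα‖₂² + λ‖α‖₁` has its
`j`-th coefficient equal to zero. -/
theorem stmt10 (d m : ℕ) (t : Fin d → ℝ) (V : Matrix (Fin d) (Fin m) ℝ)
    (lam : ℝ) (hlam : 0 < lam)
    (j : Fin m)
    (horth_t : ∑ i, V i j * t i = 0)
    (horth_cols : ∀ k : Fin m, k ≠ j → ∑ i, V i j * V i k = 0)
    (F : (Fin m → ℝ) → ℝ)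
    (hF : ∀ α, F α = (∑ i, (t i - V.mulVec α i) ^ 2) + lam * ∑ j', |α j'|) :
    ∀ αstar : Fin m → ℝ, (∀ α, F αstar ≤ F α) → αstar j = 0 := by
  intro αstar hmin
  by_contra hne
  set a := αstar j with ha
  set α' := Function.update αstar j 0 with hα'
  -- mulVec relation
  have hmul : ∀ i, V.mulVec αstar i = V.mulVec α' i + a * V i j := by
    intro i
    simp only [Matrix.mulVec, dotProduct]
    have h1 : ∑ k, V i k * αstar k
        = V i j * αstar j + ∑ k ∈ Finset.univ.erase j, V i k * αstar k :=
      (Finset.add_sum_erase _ _ (Finset.mem_univ j)).symm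
    have h2 : ∑ k, V i k * α' k
        = V i j * α' j + ∑ k ∈ Finset.univ.erase j, V i k * α' k :=
      (Finset.add_sum_erase _ _ (Finset.mem_univ j)).symm
    have h3 : ∑ k ∈ Finset.univ.erase j, V i k * α' k
        = ∑ k ∈ Finset.univ.erase j, V i k * αstar k := by
      apply Finset.sum_congr rfl
      intro k hk
      rw [hα', Function.update_of_ne (Finset.ne_of_mem_erase hk)]
    rw [h1, h2, h3, hα', Function.update_self]
    ring
  -- cross term vanishes
  have hcross : ∑ i, V i j * (t i - V.mulVec α' i) = 0 := by
    have hswap : ∑ i, V i j * V.mulVec α' i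
        = ∑ k, α' k * ∑ i, V i j * V i k := by
      simp only [Matrix.mulVec, dotProduct, Finset.mul_sum]
      rw [Finset.sum_comm]
      apply Finset.sum_congr rfl
      intro k _
      apply Finset.sum_congr rfl
      intro i _
      ring
    have hzero : ∑ k, α' k * ∑ i, V i j * V i k = 0 := by
      apply Finset.sum_eq_zero
      intro k _
      by_cases hk : k = j
      · subst hk
        rw [hα', Function.update_self, zero_mul]
      · rw [horth_cols k hk, mul_zero]
    simp only [mul_sub]
    rw [Finset.sum_sub_distrib, horth_t, hswap, hzero, sub_zero]
  -- quadratic part identity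
  have hquad : ∑ i, (t i - V.mulVec αstar i) ^ 2
      = (∑ i, (t i - V.mulVec α' i) ^ 2) + a ^ 2 * ∑ i, (V i j) ^ 2 := by
    have : ∀ i, (t i - V.mulVec αstar i) ^ 2
        = (t i - V.mulVec α' i) ^ 2 - 2 * a * (V i j * (t i - V.mulVec α' i))
          + a ^ 2 * (V i j) ^ 2 := by
      intro i
      rw [hmul i]
      ring
    calc ∑ i, (t i - V.mulVec αstar i) ^ 2
        = ∑ i, ((t i - V.mulVec α' i) ^ 2
            - 2 * a * (V i j * (t i - V.mulVec α' i)) + a ^ 2 * (V i j) ^ 2) :=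
          Finset.sum_congr rfl (fun i _ => this i)
      _ = (∑ i, (t i - V.mulVec α' i) ^ 2)
            - 2 * a * (∑ i, V i j * (t i - V.mulVec α' i))
            + a ^ 2 * ∑ i, (V i j) ^ 2 := by
          rw [Finset.sum_add_distrib, Finset.sum_sub_distrib, Finset.mul_sum,
            Finset.mul_sum]
      _ = _ := by rw [hcross]; ring
  -- L1 part
  have hl1 : ∑ k, |αstar k| = |a| + ∑ k, |α' k| := by
    have h1 : ∑ k, |αstar k|
        = |αstar j| + ∑ k ∈ Finset.univ.erase j, |αstar k| :=
      (Finset.add_sum_erase _ _ (Finset.mem_univ j)).symm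
    have h2 : ∑ k, |α' k|
        = |α' j| + ∑ k ∈ Finset.univ.erase j, |α' k| :=
      (Finset.add_sum_erase _ _ (Finset.mem_univ j)).symm
    have h3 : ∑ k ∈ Finset.univ.erase j, |α' k|
        = ∑ k ∈ Finset.univ.erase j, |αstar k| := by
      apply Finset.sum_congr rfl
      intro k hk
      rw [hα', Function.update_of_ne (Finset.ne_of_mem_erase hk)]
    rw [h1, h2, h3, hα', Function.update_self, abs_zero]
    ring
  have hFid : F αstar = F α' + a ^ 2 * (∑ i, (V i j) ^ 2) + lam * |a| := by
    rw [hF, hF, hquad, hl1]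
    ring
  have hle := hmin α'
  rw [hFid] at hle
  have hnn : 0 ≤ a ^ 2 * ∑ i, (V i j) ^ 2 :=
    mul_nonneg (sq_nonneg a) (Finset.sum_nonneg fun i _ => sq_nonneg _)
  have hpos : 0 < lam * |a| := mul_pos hlam (abs_pos.mpr hne)
  linarith
end
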